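/- Let H be a mesh and τ_1 →^p τ_2 a collective operation step between well-formed distributed types over H. If p = allGather(i) removes an axis x : n ∈ H, then localsize(τ_2) = n · localsize(τ_1); if p = dynSlice(i,x) with x : n ∈ H, then n · localsize(τ_2) = localsize(τ_1); and if p is an allToAll(i,j) or an allPermute step, then localsize(τ_2) = localsize(τ_1). -/
import Mathlib


/-! ## Meshes, index tuples, distributed dimensions and types -/

structure Mesh where
  axes : Finset String
  size : String → ℕ
  size_pos : ∀ x ∈ axes, 1 ≤ size x

def Mesh.hasAxis (H : Mesh) (x : String) (n : ℕ) : Prop :=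
  x ∈ H.axes ∧ H.size x = n

abbrev IndexTuple (H : Mesh) : Type :=
  {ι : String → ℕ // ∀ x : String, (x ∈ H.axes → ι x < H.size x) ∧ (x ∉ H.axes → ι x = 0)}

structure Dim where
  tile : ℕ
  axes : List String
  global : ℕ
deriving DecidableEq

abbrev DType := List Dim

def Mesh.WFDim (H : Mesh) (d : Dim) : Prop :=
  1 ≤ d.tile ∧ d.axes.Nodup ∧ (∀ x ∈ d.axes, x ∈ H.axes) ∧
    d.tile * (d.axes.map H.size).prod = d.global

def Mesh.WFType (H : Mesh) (τ : DType) : Prop :=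
  (∀ d ∈ τ, H.WFDim d) ∧ List.Pairwise (fun d e => ∀ x ∈ d.axes, x ∉ e.axes) τ

def globaltype (τ : DType) : List ℕ := τ.map Dim.global
def localtype (τ : DType) : List ℕ := τ.map Dim.tile
def localsize (τ : DType) : ℕ := (τ.map Dim.tile).prod

def typeAxes : DType → List String
  | [] => []
  | d :: τ => d.axes ++ typeAxes τ

/-- Base offset map of a distributed dimension, `⟦c{xs}n⟧_D`. -/
def dimOffset (H : Mesh) : ℕ → List String → (String → ℕ) → ℕ
  | _, [], _ => 0
  | c, x :: xs, ι => c * ι x + dimOffset H (c * H.size x) xs ι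

abbrev BOM (H : Mesh) : Type := IndexTuple H → List ℕ

/-- Base offset map of a distributed type, `⟦τ⟧_T`. -/
def typeOffset (H : Mesh) (τ : DType) : BOM H :=
  fun ι => τ.map (fun d => dimOffset H d.tile d.axes ι.val)

/-! ## Collective operations (high-level typing rules) -/

inductive Label where
  | allGather (i : ℕ)
  | dynSlice (i : ℕ) (x : String)
  | allToAll (i j : ℕ)
  | allPermute
deriving DecidableEq

inductive OpKind where
  | gather | slice | toAll | permute
deriving DecidableEq

def Label.kind : Label → OpKind
  | .allGather _ => .gather
  | .dynSlice _ _ => .slice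
  | .allToAll _ _ => .toAll
  | .allPermute => .permute

inductive Step (H : Mesh) : Label → DType → DType → Prop where
  | allGather {τ : DType} (i : ℕ) {c : ℕ} {x : String} {xs : List String} {s n : ℕ}
      (hwf : H.WFType τ) (hx : H.hasAxis x n)
      (hi : τ[i]? = some ⟨c, x :: xs, s⟩) :
      Step H (.allGather i) τ (τ.set i ⟨c * n, xs, s⟩)
  | dynSlice {τ : DType} (i : ℕ) (x : String) {c : ℕ} {xs : List String} {s n : ℕ}
      (hwf : H.WFType τ) (hx : H.hasAxis x n) (hfresh : x ∉ typeAxes τ)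
      (hi : τ[i]? = some ⟨c * n, xs, s⟩) :
      Step H (.dynSlice i x) τ (τ.set i ⟨c, x :: xs, s⟩)
  | allToAll {τ : DType} (i j : ℕ) {ci : ℕ} {x : String} {xsi : List String} {si cj : ℕ}
      {xsj : List String} {sj n : ℕ}
      (hwf : H.WFType τ) (hij : i ≠ j) (hx : H.hasAxis x n)
      (hi : τ[i]? = some ⟨ci, x :: xsi, si⟩)
      (hj : τ[j]? = some ⟨cj, xsj, sj⟩)
      (hdvd : n ∣ cj) :
      Step H (.allToAll i j) τ ((τ.set i ⟨ci * n, xsi, si⟩).set j ⟨cj / n, x :: xsj, sj⟩)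
  | allPermute {τ₁ τ₂ : DType}
      (hwf1 : H.WFType τ₁) (hwf2 : H.WFType τ₂)
      (hl : localtype τ₁ = localtype τ₂) (hg : globaltype τ₁ = globaltype τ₂) :
      Step H .allPermute τ₁ τ₂

/-! ## Sequences of collective operations -/

inductive CSeq (H : Mesh) : DType → DType → Type where
  | nil (τ : DType) : CSeq H τ τ
  | cons {τ₁ τ₂ τ₃ : DType} (p : Label) (h : Step H p τ₁ τ₂) (s : CSeq H τ₂ τ₃) : CSeq H τ₁ τ₃

def CSeq.labels {H : Mesh} : {τ₁ τ₂ : DType} → CSeq H τ₁ τ₂ → List Label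
  | _, _, .nil _ => []
  | _, _, .cons p _ s => p :: s.labels

def CSeq.typesList {H : Mesh} : {τ₁ τ₂ : DType} → CSeq H τ₁ τ₂ → List DType
  | _, _, .nil τ => [τ]
  | τ, _, .cons _ _ s => τ :: s.typesList

/-- The height 𝔥 of a sequence: the maximum `localsize` over all types in it. -/
def CSeq.height {H : Mesh} {τ₁ τ₂ : DType} (s : CSeq H τ₁ τ₂) : ℕ :=
  (s.typesList.map localsize).foldr max 0

/-- Cost of a single step with source `σ₁` and target `σ₂`. -/
def stepCost (p : Label) (σ₁ σ₂ : DType) : ℕ :=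
  match p with
  | .allGather _ => localsize σ₂
  | .dynSlice _ _ => 0
  | .allToAll _ _ => localsize σ₁
  | .allPermute => localsize σ₁

def CSeq.cost {H : Mesh} : {τ₁ τ₂ : DType} → CSeq H τ₁ τ₂ → ℕ
  | _, _, .nil _ => 0
  | _, _, @CSeq.cons _ σ₁ σ₂ _ p _ s => stepCost p σ₁ σ₂ + s.cost

/-- Normal form: labels matched by `dynSlice* {allToAll | allPermute}* allGather*`. -/
def NormalFormK (ks : List OpKind) : Prop :=
  ∃ a b c : List OpKind, ks = a ++ b ++ c ∧
    (∀ k ∈ a, k = OpKind.slice) ∧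
    (∀ k ∈ b, k = OpKind.toAll ∨ k = OpKind.permute) ∧
    (∀ k ∈ c, k = OpKind.gather)

/-! ## Weak collectives -/

/-- Equivalence of base offset maps. -/
def bomEquiv (H : Mesh) (β₁ β₂ : BOM H) : Prop :=
  ∃ π : Equiv.Perm (IndexTuple H), β₂ = β₁ ∘ π

/-- The weak collective relation `⟦τ₁⟧_E ▶^p ⟦τ₂⟧_E`, represented on types. -/
def WeakStep (H : Mesh) (p : Label) (τ₁ τ₂ : DType) : Prop :=
  p ≠ Label.allPermute ∧ H.WFType τ₁ ∧ H.WFType τ₂ ∧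
  ∃ σ₁ σ₂ : DType, Step H p σ₁ σ₂ ∧
    bomEquiv H (typeOffset H σ₁) (typeOffset H τ₁) ∧
    bomEquiv H (typeOffset H σ₂) (typeOffset H τ₂)

inductive WkSeq (H : Mesh) : DType → DType → Type where
  | nil (τ : DType) : WkSeq H τ τ
  | cons {τ₁ τ₂ τ₃ : DType} (p : Label) (h : WeakStep H p τ₁ τ₂) (s : WkSeq H τ₂ τ₃) :
      WkSeq H τ₁ τ₃

def WkSeq.labels {H : Mesh} : {τ₁ τ₂ : DType} → WkSeq H τ₁ τ₂ → List Label
  | _, _, .nil _ => []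
  | _, _, .cons p _ s => p :: s.labels

def WkSeq.typesList {H : Mesh} : {τ₁ τ₂ : DType} → WkSeq H τ₁ τ₂ → List DType
  | _, _, .nil τ => [τ]
  | τ, _, .cons _ _ s => τ :: s.typesList

def WkSeq.height {H : Mesh} {τ₁ τ₂ : DType} (s : WkSeq H τ₁ τ₂) : ℕ :=
  (s.typesList.map localsize).foldr max 0

def WkSeq.cost {H : Mesh} : {τ₁ τ₂ : DType} → WkSeq H τ₁ τ₂ → ℕ
  | _, _, .nil _ => 0
  | _, _, @WkSeq.cons _ σ₁ σ₂ _ p _ s => stepCost p σ₁ σ₂ + s.cost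

/-! ## Low-level MPI-style collectives on device assignments -/

abbrev DevMap (H : Mesh) (D : Type) := IndexTuple H ≃ D

structure DevAssign (H : Mesh) (D : Type) where
  dmap : DevMap H D
  bom : BOM H

inductive LLabel where
  | allGather (x : String)
  | allToAll (x : String) (j : ℕ)
  | dynSlice (i : ℕ) (x : String)
  | allPermute
deriving DecidableEq

def LLabel.kind : LLabel → OpKind
  | .allGather _ => .gather
  | .allToAll _ _ => .toAll
  | .dynSlice _ _ => .slice
  | .allPermute => .permute

inductive LStep (H : Mesh) (D : Type) : LLabel → DevAssign H D → DevAssign H D → Type where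
  | gather (τ : DType) (i : ℕ) (c : ℕ) (ys : List String) (x : String) (xs : List String)
      (s n : ℕ) (φ φ' : DevMap H D)
      (hwf : H.WFType τ) (hx : H.hasAxis x n)
      (hi : τ[i]? = some ⟨c, ys ++ x :: xs, s⟩)
      (hmap : typeOffset H (τ.set i ⟨c, x :: (ys ++ xs), s⟩) ∘ ⇑φ'.symm
            = typeOffset H τ ∘ ⇑φ.symm) :
      LStep H D (.allGather x) ⟨φ, typeOffset H τ⟩
        ⟨φ', typeOffset H (τ.set i ⟨c * n, ys ++ xs, s⟩)⟩
  | toAll (τ : DType) (i j : ℕ) (ci : ℕ) (ys : List String) (x : String) (xs : List String)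
      (si cj : ℕ) (xsj : List String) (sj n : ℕ) (φ φ' : DevMap H D)
      (hwf : H.WFType τ) (hij : i ≠ j) (hx : H.hasAxis x n)
      (hi : τ[i]? = some ⟨ci, ys ++ x :: xs, si⟩)
      (hj : τ[j]? = some ⟨cj, xsj, sj⟩)
      (hdvd : n ∣ cj)
      (hmap : typeOffset H (τ.set i ⟨ci, x :: (ys ++ xs), si⟩) ∘ ⇑φ'.symm
            = typeOffset H τ ∘ ⇑φ.symm) :
      LStep H D (.allToAll x j) ⟨φ, typeOffset H τ⟩
        ⟨φ', typeOffset H ((τ.set i ⟨ci * n, ys ++ xs, si⟩).set j ⟨cj / n, x :: xsj, sj⟩)⟩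
  | slice (τ : DType) (i : ℕ) (x : String) (c : ℕ) (xs : List String) (s n : ℕ)
      (φ : DevMap H D)
      (hwf : H.WFType τ) (hx : H.hasAxis x n) (hfresh : x ∉ typeAxes τ)
      (hi : τ[i]? = some ⟨c * n, xs, s⟩) :
      LStep H D (.dynSlice i x) ⟨φ, typeOffset H τ⟩ ⟨φ, typeOffset H (τ.set i ⟨c, x :: xs, s⟩)⟩
  | permute (τ : DType) (ρ : Equiv.Perm (IndexTuple H)) (β' : BOM H)
      (φ φ' : DevMap H D) (π : Equiv.Perm D)
      (hwf : H.WFType τ)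
      (hmap : β' ∘ ⇑φ'.symm = (typeOffset H τ ∘ ⇑ρ) ∘ ⇑φ.symm ∘ ⇑π) :
      LStep H D .allPermute ⟨φ, typeOffset H τ ∘ ⇑ρ⟩ ⟨φ', β'⟩

def LStep.cost {H : Mesh} {D : Type} :
    {l : LLabel} → {a b : DevAssign H D} → LStep H D l a b → ℕ
  | _, _, _, .gather τ i c ys x xs s n .. => localsize (τ.set i ⟨c * n, ys ++ xs, s⟩)
  | _, _, _, .toAll τ .. => localsize τ
  | _, _, _, .slice .. => 0
  | _, _, _, .permute τ .. => localsize τ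

inductive LoSeq (H : Mesh) (D : Type) : DevAssign H D → DevAssign H D → Type where
  | nil (a : DevAssign H D) : LoSeq H D a a
  | cons {a b c : DevAssign H D} (l : LLabel) (st : LStep H D l a b) (s : LoSeq H D b c) :
      LoSeq H D a c

def LoSeq.labels {H : Mesh} {D : Type} : {a b : DevAssign H D} → LoSeq H D a b → List LLabel
  | _, _, .nil _ => []
  | _, _, .cons l _ s => l :: s.labels

def LoSeq.states {H : Mesh} {D : Type} : {a b : DevAssign H D} → LoSeq H D a b → List (DevAssign H D)
  | _, _, .nil a => [a]
  | a, _, .cons _ _ s => a :: s.states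

def LoSeq.cost {H : Mesh} {D : Type} : {a b : DevAssign H D} → LoSeq H D a b → ℕ
  | _, _, .nil _ => 0
  | _, _, .cons _ st s => st.cost + s.cost

lemma localsize_set (τ : DType) (i : ℕ) (d e : Dim) (he : τ[i]? = some e) :
    localsize (τ.set i d) * e.tile = d.tile * localsize τ := by
  induction τ generalizing i with
  | nil => simp at he
  | cons a τ ih =>
    cases i with
    | zero =>
      simp only [List.getElem?_cons_zero, Option.some_inj] at he
      subst he
      simp [localsize, List.set]
      ring
    | succ k =>
      simp only [List.getElem?_cons_succ] at he
      simp only [List.set, localsize, List.map_cons, List.prod_cons]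
      have := ih k he
      simp only [localsize] at this
      ring_nf
      ring_nf at this
      nlinarith [this]

lemma tile_pos {H : Mesh} {τ : DType} (hwf : H.WFType τ) {i : ℕ} {e : Dim}
    (he : τ[i]? = some e) : 1 ≤ e.tile := by
  have hm : e ∈ τ := List.mem_of_getElem? he
  exact (hwf.1 e hm).1

/-- Effect of each collective operation on the local size. -/
theorem stmt14 (H : Mesh) (p : Label) (τ₁ τ₂ : DType) (h : Step H p τ₁ τ₂) :
    (∀ i, p = Label.allGather i →
      ∃ x n, H.hasAxis x n ∧ localsize τ₂ = n * localsize τ₁) ∧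
    (∀ i x, p = Label.dynSlice i x →
      ∃ n, H.hasAxis x n ∧ n * localsize τ₂ = localsize τ₁) ∧
    (∀ i j, p = Label.allToAll i j → localsize τ₂ = localsize τ₁) ∧
    (p = Label.allPermute → localsize τ₂ = localsize τ₁) := by
  constructor
  · rintro i rfl
    cases h with
    | allGather i hwf hx hi =>
      rename_i c x xs s n
      refine ⟨x, n, hx, ?_⟩
      have key := localsize_set τ₁ i ⟨c * n, xs, s⟩ ⟨c, x :: xs, s⟩ hi
      have hc : 1 ≤ c := tile_pos hwf hi
      simp only at key
      have : localsize (τ₁.set i ⟨c * n, xs, s⟩) * c = (n * localsize τ₁) * c := by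
        nlinarith [key]
      exact Nat.eq_of_mul_eq_mul_right hc this
  refine ⟨?_, ?_, ?_⟩
  · rintro i x rfl
    cases h with
    | dynSlice i x hwf hx hfresh hi =>
      rename_i c xs s n
      refine ⟨n, hx, ?_⟩
      have key := localsize_set τ₁ i ⟨c, x :: xs, s⟩ ⟨c * n, xs, s⟩ hi
      have hc : 1 ≤ c * n := tile_pos hwf hi
      have hc' : 1 ≤ c := Nat.one_le_iff_ne_zero.mpr (by rintro rfl; simp at hc)
      simp only at key
      have : (n * localsize (τ₁.set i ⟨c, x :: xs, s⟩)) * c = localsize τ₁ * c := by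
        nlinarith [key]
      exact Nat.eq_of_mul_eq_mul_right hc' this
  · rintro i j rfl
    cases h with
    | allToAll i j hwf hij hx hi hj hdvd =>
      rename_i ci x xsi si cj xsj sj n
      have hci : 1 ≤ ci := tile_pos hwf hi
      have hcj : 1 ≤ cj := tile_pos hwf hj
      have hn : 1 ≤ n := by
        rcases hx with ⟨hxm, rfl⟩
        exact H.size_pos x hxm
      have hj' : (τ₁.set i ⟨ci * n, xsi, si⟩)[j]? = some ⟨cj, xsj, sj⟩ := by
        rw [List.getElem?_set]
        simp [hij]
        exact hj
      have k1 := localsize_set τ₁ i ⟨ci * n, xsi, si⟩ ⟨ci, x :: xsi, si⟩ hi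
      have k2 := localsize_set (τ₁.set i ⟨ci * n, xsi, si⟩) j ⟨cj / n, x :: xsj, sj⟩
        ⟨cj, xsj, sj⟩ hj'
      simp only at k1 k2
      have hdiv : cj / n * n = cj := Nat.div_mul_cancel hdvd
      have hcicj : 1 ≤ ci * cj := Nat.one_le_iff_ne_zero.mpr (by positivity)
      have hle : n ≤ cj := Nat.le_of_dvd (by omega) hdvd
      have hq : 1 ≤ cj / n := (Nat.one_le_div_iff (by omega)).mpr hle
      have h1 : localsize (τ₁.set i ⟨ci * n, xsi, si⟩) = n * localsize τ₁ :=
        Nat.eq_of_mul_eq_mul_right hci (by nlinarith [k1])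
      have h2 : localsize ((τ₁.set i ⟨ci * n, xsi, si⟩).set j ⟨cj / n, x :: xsj, sj⟩) * n
          = localsize (τ₁.set i ⟨ci * n, xsi, si⟩) := by
        have h' : cj / n * (localsize ((τ₁.set i ⟨ci * n, xsi, si⟩).set j
            ⟨cj / n, x :: xsj, sj⟩) * n)
            = cj / n * localsize (τ₁.set i ⟨ci * n, xsi, si⟩) := by
          calc cj / n * (localsize ((τ₁.set i ⟨ci * n, xsi, si⟩).set j
                ⟨cj / n, x :: xsj, sj⟩) * n)
              = localsize ((τ₁.set i ⟨ci * n, xsi, si⟩).set j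
                ⟨cj / n, x :: xsj, sj⟩) * (cj / n * n) := by ring
            _ = localsize ((τ₁.set i ⟨ci * n, xsi, si⟩).set j
                ⟨cj / n, x :: xsj, sj⟩) * cj := by rw [hdiv]
            _ = cj / n * localsize (τ₁.set i ⟨ci * n, xsi, si⟩) := k2
        exact Nat.eq_of_mul_eq_mul_left (Nat.lt_of_lt_of_le Nat.zero_lt_one hq) h'
      exact Nat.eq_of_mul_eq_mul_right hn (by rw [h2, h1]; ring)
  · rintro rfl
    cases h with
    | allPermute hwf1 hwf2 hl hg =>
      simp only [localsize]
      simp only [localtype] at hl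
      rw [hl]
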